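/- arXiv:1904.06899 — 3 statements merged into one kernel-verified Lean document; each statement's English description precedes it below -/
import Mathlib

section
/- For the linear AoI cost, given K ≥ 2 and positive interarrival times x₁,…,x_{K+1}, the merged policy x′ with x′₁ = x₂, x′₂ = x₃ + x₁, and x′_k = x_{k+1} for 3 ≤ k ≤ K satisfies ∑_{k=1}^{K−1} x′_k x′_{k+1} ≥ ∑_{k=1}^{K} x_k x_{k+1}, with the x′_k positive and summing to the same total T. -/
open Finset

private lemma shift_Ioc (f : ℕ → ℝ) (a b : ℕ) :
    ∑ k ∈ Finset.Ioc a b, f (k + 1) = ∑ k ∈ Finset.Ioc (a + 1) (b + 1), f k := by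
  rw [← Finset.map_add_right_Ioc a b 1, Finset.sum_map]
  rfl

theorem merge_policy_linear
    (K : ℕ) (hK : 2 ≤ K) (T : ℝ) (x : ℕ → ℝ)
    (hpos : ∀ k ∈ Finset.Icc 1 (K + 1), 0 < x k)
    (hsum : ∑ k ∈ Finset.Icc 1 (K + 1), x k = T)
    (x' : ℕ → ℝ)
    (hx' : ∀ k, x' k = if k = 1 then x 2 else if k = 2 then x 3 + x 1 else x (k + 1)) :
    (∀ k ∈ Finset.Icc 1 K, 0 < x' k) ∧
    (∑ k ∈ Finset.Icc 1 K, x' k = T) ∧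
    (∑ k ∈ Finset.Icc 1 (K - 1), x' k * x' (k + 1) ≥
      ∑ k ∈ Finset.Icc 1 K, x k * x (k + 1)) := by
  have hpos' : ∀ k, 1 ≤ k → k ≤ K + 1 → 0 < x k := fun k h1 h2 =>
    hpos k (Finset.mem_Icc.mpr ⟨h1, h2⟩)
  have hx1 : x' 1 = x 2 := by rw [hx']; simp
  have hx2 : x' 2 = x 3 + x 1 := by rw [hx']; simp
  have hxk : ∀ k, 3 ≤ k → x' k = x (k + 1) := by
    intro k hk
    have h1 : k ≠ 1 := by omega
    have h2 : k ≠ 2 := by omega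
    rw [hx']; simp [h1, h2]
  have hIcc : ∀ n : ℕ, Finset.Icc 1 n = Finset.Ioc 0 n := fun n => Finset.Icc_add_one_left_eq_Ioc 0 n
  refine ⟨?_, ?_, ?_⟩
  · intro k hk
    rw [Finset.mem_Icc] at hk
    rcases eq_or_ne k 1 with rfl | h1
    · rw [hx1]; exact hpos' 2 (by omega) (by omega)
    rcases eq_or_ne k 2 with rfl | h2
    · rw [hx2]
      have := hpos' 3 (by omega) (by omega)
      have := hpos' 1 (by omega) (by omega)
      linarith
    · rw [hxk k (by omega)]
      exact hpos' (k + 1) (by omega) (by omega)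
  · rw [hIcc, ← Finset.sum_Ioc_consecutive x' (by omega : 0 ≤ 2) hK]
    have hrest : ∑ k ∈ Finset.Ioc 2 K, x' k = ∑ k ∈ Finset.Ioc 3 (K + 1), x k := by
      rw [← shift_Ioc]
      exact Finset.sum_congr rfl fun k hk => hxk k (by
        rw [Finset.mem_Ioc] at hk; omega)
    rw [hrest, ← hsum, hIcc, ← Finset.sum_Ioc_consecutive x (by omega : 0 ≤ 3) (by omega : 3 ≤ K + 1)]
    have h2 : Finset.Ioc 0 2 = ({1, 2} : Finset ℕ) := by decide
    have h3 : Finset.Ioc 0 3 = ({1, 2, 3} : Finset ℕ) := by decide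
    rw [h2, h3]
    simp [hx1, hx2]
    ring
  · rcases eq_or_lt_of_le hK with rfl | hK3
    · norm_num [show Finset.Icc 1 1 = ({1} : Finset ℕ) from rfl,
        show Finset.Icc 1 2 = ({1, 2} : Finset ℕ) from rfl, hx1, hx2]
      ring_nf
      exact le_of_eq (by ring)
    · have hK3 : 3 ≤ K := hK3
      rw [hIcc, hIcc, ← Finset.sum_Ioc_consecutive (fun k => x' k * x' (k + 1))
        (by omega : 0 ≤ 2) (by omega : 2 ≤ K - 1),
        ← Finset.sum_Ioc_consecutive (fun k => x k * x (k + 1))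
        (by omega : 0 ≤ 3) (by omega : 3 ≤ K)]
      have hrest : ∑ k ∈ Finset.Ioc 2 (K - 1), x' k * x' (k + 1)
          = ∑ k ∈ Finset.Ioc 3 K, x k * x (k + 1) := by
        have := shift_Ioc (fun k => x k * x (k + 1)) 2 (K - 1)
        rw [show 2 + 1 = 3 from rfl, show K - 1 + 1 = K by omega] at this
        rw [← this]
        refine Finset.sum_congr rfl fun k hk => ?_
        rw [Finset.mem_Ioc] at hk
        rw [hxk k (by omega), hxk (k + 1) (by omega)]
      rw [hrest]
      have h2 : Finset.Ioc 0 2 = ({1, 2} : Finset ℕ) := by decide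
      have h3 : Finset.Ioc 0 3 = ({1, 2, 3} : Finset ℕ) := by decide
      rw [h2, h3]
      have hx3' : x' 3 = x 4 := hxk 3 (by omega)
      have p1 := hpos' 1 (by omega) (by omega)
      have p4 := hpos' 4 (by omega) (by omega)
      simp only [Finset.sum_insert (by decide : (1:ℕ) ∉ ({2}:Finset ℕ)),
        Finset.sum_insert (by decide : (1:ℕ) ∉ ({2,3}:Finset ℕ)),
        Finset.sum_insert (by decide : (2:ℕ) ∉ ({3}:Finset ℕ)),
        Finset.sum_singleton, hx1, hx2, hx3']
      nlinarith [mul_pos p1 p4]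
end

section
/- Let f be increasing and convex with F(x)=∫₀ˣ f and DF(x,y)=F(x+y)−F(x)−F(y). For any K ≥ 1 and any positive x₁,…,x_{K+1} with ∑ x_k = T, the revenue satisfies ∑_{k=1}^{K} DF(x_{k+1}, x_k) ≤ DF(T/2, T/2), i.e., the single update at time T/2 maximizes the time-dependent pricing revenue. -/
/-!
Write `D a b = F (a + b) - F a - F b`. Since `f` is monotone, `F` is convex, so `D` is monotone in
each argument when the other is nonnegative, and `D a b ≤ D ((a + b) / 2) ((a + b) / 2)`. Since `f`
is convex, `F` satisfies Hlawka's inequality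
`F (a + b) + F (b + c) + F (a + c) + F 0 ≤ F (a + b + c) + F a + F b + F c` for `a, b, c ≥ 0`,
i.e. `D b a + D c b ≤ D (a + c) b`. Hence merging the first interarrival time into the third one
keeps the total length and does not decrease the revenue; after finitely many merges at most two
intervals are left, and the midpoint bound concludes.
-/

open Finset

def cauchyDiff (G : ℝ → ℝ) (a b : ℝ) : ℝ := G (a + b) - G a - G b

/-- `revenue G [x₁, …, x_{K+1}] = ∑ k ∈ Icc 1 K, cauchyDiff G x_{k+1} x_k`. -/
def revenue (G : ℝ → ℝ) : List ℝ → ℝ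
  | a :: b :: l => cauchyDiff G b a + revenue G (b :: l)
  | _ => 0

theorem revenue_ofFn (G : ℝ → ℝ) (K : ℕ) (x : ℕ → ℝ) :
    revenue G (List.ofFn fun i : Fin (K + 1) => x i) =
      ∑ k ∈ range K, cauchyDiff G (x (k + 1)) (x k) := by
  induction K generalizing x with
  | zero => simp [revenue]
  | succ K ih =>
    have := ih (fun k => x (k + 1))
    rw [List.ofFn_succ] at this ⊢
    rw [sum_range_succ', ← this]
    simp [revenue, add_comm]

theorem ConvexOn.map_add_add_map_add_le {G : ℝ → ℝ} (hG : ConvexOn ℝ Set.univ G) (t : ℝ)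
    {y z : ℝ} (hy : 0 ≤ y) (hz : 0 ≤ z) : G (t + y) + G (t + z) ≤ G t + G (t + y + z) := by
  rcases (add_nonneg hy hz).eq_or_lt with hyz | hyz
  · obtain ⟨rfl, rfl⟩ : y = 0 ∧ z = 0 := ⟨by linarith, by linarith⟩
    simp
  have combo {u v : ℝ} (hu : 0 ≤ u) (hv : 0 ≤ v) (huv : u + v = y + z) :
      G (t + v) ≤ u / (y + z) * G t + v / (y + z) * G (t + y + z) := by
    have := hG.2 (Set.mem_univ t) (Set.mem_univ (t + y + z)) (div_nonneg hu hyz.le)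
      (div_nonneg hv hyz.le) (by field_simp; linarith)
    have hpt : u / (y + z) * t + v / (y + z) * (t + y + z) = t + v := by
      field_simp
      linear_combination t * huv
    simpa only [smul_eq_mul, hpt] using this
  have h₁ := combo hz hy (add_comm z y)
  have h₂ := combo hy hz rfl
  have : z / (y + z) + y / (y + z) = 1 := by field_simp; ring
  linear_combination h₁ + h₂ + (G t + G (t + y + z)) * this

theorem hlawka_of_hasDerivAt {F f : ℝ → ℝ} (hF : ∀ x, HasDerivAt F (f x) x)
    (hf : ConvexOn ℝ Set.univ f) {a b c : ℝ} (ha : 0 ≤ a) (hb : 0 ≤ b) (hc : 0 ≤ c) :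
    F (a + b) + F (b + c) + F (a + c) + F 0 ≤ F (a + b + c) + F a + F b + F c := by
  -- the derivative `f (t + b + c) - f (t + b) - f (t + c) + f t` is nonnegative by convexity
  have hmono : Monotone fun t => F (t + (b + c)) - F (t + b) - F (t + c) + F t :=
    monotone_of_hasDerivAt_nonneg
      (fun t => ((((hF _).comp_add_const t (b + c)).sub ((hF _).comp_add_const t b)).sub
        ((hF _).comp_add_const t c)).add (hF t))
      (fun t => by
        have := hf.map_add_add_map_add_le t hb hc
        simp only [Pi.zero_apply, ← add_assoc]
        linarith)
  have := hmono ha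
  simp only [zero_add, ← add_assoc] at this
  linarith

section Convex

variable {G : ℝ → ℝ}

theorem cauchyDiff_mono_right (hG : ConvexOn ℝ Set.univ G) {a b b' : ℝ} (ha : 0 ≤ a)
    (hb : b ≤ b') : cauchyDiff G a b ≤ cauchyDiff G a b' := by
  have := hG.map_add_add_map_add_le b ha (sub_nonneg.2 hb)
  rw [add_comm b a, add_sub_cancel, show a + b + (b' - b) = a + b' by ring] at this
  simp only [cauchyDiff]
  linarith

theorem cauchyDiff_le_cauchyDiff_half (hG : ConvexOn ℝ Set.univ G) (a b : ℝ) :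
    cauchyDiff G a b ≤ cauchyDiff G ((a + b) / 2) ((a + b) / 2) := by
  have := hG.2 (Set.mem_univ a) (Set.mem_univ b) (by norm_num : (0 : ℝ) ≤ 1 / 2)
    (by norm_num : (0 : ℝ) ≤ 1 / 2) (by norm_num)
  simp only [smul_eq_mul] at this
  rw [show 1 / 2 * a + 1 / 2 * b = (a + b) / 2 by ring] at this
  simp only [cauchyDiff, add_halves]
  linarith

theorem revenue_cons_mono (hG : ConvexOn ℝ Set.univ G) {l : List ℝ} (hl : ∀ b ∈ l, 0 ≤ b)
    {a a' : ℝ} (ha : a ≤ a') : revenue G (a :: l) ≤ revenue G (a' :: l) := by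
  cases l with
  | nil => rfl
  | cons b l =>
    simp only [revenue]
    gcongr
    exact cauchyDiff_mono_right hG (hl b List.mem_cons_self) ha

theorem revenue_le_cauchyDiff_half (hG : ConvexOn ℝ Set.univ G) (hG0 : G 0 = 0)
    (hH : ∀ a b c : ℝ, 0 ≤ a → 0 ≤ b → 0 ≤ c →
      G (a + b) + G (b + c) + G (a + c) + G 0 ≤ G (a + b + c) + G a + G b + G c) :
    ∀ l : List ℝ, (∀ a ∈ l, 0 ≤ a) → revenue G l ≤ cauchyDiff G (l.sum / 2) (l.sum / 2)
  | [], _ => by simp [revenue, cauchyDiff, hG0]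
  | [a], _ => by simpa [revenue, cauchyDiff, hG0] using cauchyDiff_le_cauchyDiff_half hG a 0
  | [a, b], _ => by simpa [revenue, add_comm b a] using cauchyDiff_le_cauchyDiff_half hG b a
  | a :: b :: c :: l, hl => by
    simp only [List.mem_cons, forall_eq_or_imp] at hl
    obtain ⟨ha, hb, hc, hl⟩ := hl
    -- Hlawka for the first two terms, monotonicity of the Cauchy difference for the next one.
    have merge : revenue G (a :: b :: c :: l) ≤ revenue G (b :: (a + c) :: l) := by
      have hlawka := hH a b c ha hb hc
      have hmono := revenue_cons_mono hG hl (le_add_of_nonneg_left ha : c ≤ a + c)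
      simp only [revenue, cauchyDiff] at hmono ⊢
      rw [add_comm b a, add_comm c b, add_right_comm a c b]
      linarith
    have hsum : (b :: (a + c) :: l).sum = (a :: b :: c :: l).sum := by
      simp only [List.sum_cons]; ring
    calc revenue G (a :: b :: c :: l) ≤ revenue G (b :: (a + c) :: l) := merge
      _ ≤ _ := revenue_le_cauchyDiff_half hG hG0 hH (b :: (a + c) :: l) (by
          simp only [List.mem_cons, forall_eq_or_imp]
          exact ⟨hb, add_nonneg ha hc, hl⟩)
      _ = _ := by rw [hsum]
termination_by l _ => l.length

end Convex

theorem single_update_maximizes_time_dependent_revenue_general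
    (f : ℝ → ℝ) (hf_mono : Monotone f) (hf_conv : ConvexOn ℝ Set.univ f)
    (F : ℝ → ℝ) (hF : ∀ x, F x = ∫ t in (0:ℝ)..x, f t)
    (DF : ℝ → ℝ → ℝ) (hDF : ∀ x y, DF x y = F (x + y) - F x - F y)
    (T : ℝ)
    (K : ℕ) (x : ℕ → ℝ)
    (hpos : ∀ k ∈ Finset.Icc 1 (K + 1), 0 < x k)
    (hsum : ∑ k ∈ Finset.Icc 1 (K + 1), x k = T) :
    ∑ k ∈ Finset.Icc 1 K, DF (x (k + 1)) (x k) ≤ DF (T / 2) (T / 2) := by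
  obtain rfl : DF = cauchyDiff F := funext₂ hDF
  have hF_deriv (t : ℝ) : HasDerivAt F (f t) t := by
    rw [funext hF]
    exact ((continuousOn_univ.1 (hf_conv.continuousOn isOpen_univ)).integral_hasStrictDerivAt
      0 t).hasDerivAt
  have hF_conv : ConvexOn ℝ Set.univ F :=
    Monotone.convexOn_univ_of_deriv (fun t => (hF_deriv t).differentiableAt)
      (by rwa [funext fun t => (hF_deriv t).deriv])
  have hF0 : F 0 = 0 := by rw [hF, intervalIntegral.integral_same]
  set l := List.ofFn fun i : Fin (K + 1) => x (i + 1)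
  have hl_nonneg : ∀ a ∈ l, 0 ≤ a := by
    simp only [l, List.mem_ofFn, forall_exists_index]
    rintro _ i rfl
    exact (hpos _ (mem_Icc.2 ⟨by omega, by omega⟩)).le
  have hl_sum : l.sum = T := by
    rw [← hsum, List.sum_ofFn, Fin.sum_univ_eq_sum_range (fun i => x (i + 1)), range_eq_Ico,
      sum_Ico_add' x, ← Ico_add_one_right_eq_Icc]
  have hl_revenue : revenue F l = ∑ k ∈ Icc 1 K, cauchyDiff F (x (k + 1)) (x k) := by
    rw [revenue_ofFn F K (fun k => x (k + 1)), range_eq_Ico,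
      sum_Ico_add' (fun k => cauchyDiff F (x (k + 1)) (x k)), ← Ico_add_one_right_eq_Icc]
  rw [← hl_revenue, ← hl_sum]
  exact revenue_le_cauchyDiff_half hF_conv hF0
    (fun a b c => hlawka_of_hasDerivAt hF_deriv hf_conv) l hl_nonneg

theorem single_update_maximizes_time_dependent_revenue
    (f : ℝ → ℝ) (hf_mono : Monotone f) (hf_conv : ConvexOn ℝ Set.univ f)
    (hf0 : 0 ≤ f 0)
    (F : ℝ → ℝ) (hF : ∀ x, F x = ∫ t in (0:ℝ)..x, f t)
    (DF : ℝ → ℝ → ℝ) (hDF : ∀ x y, DF x y = F (x + y) - F x - F y)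
    (T : ℝ) (hT : 0 < T)
    (K : ℕ) (hK : 1 ≤ K) (x : ℕ → ℝ)
    (hpos : ∀ k ∈ Finset.Icc 1 (K + 1), 0 < x k)
    (hsum : ∑ k ∈ Finset.Icc 1 (K + 1), x k = T) :
    ∑ k ∈ Finset.Icc 1 K, DF (x (k + 1)) (x k) ≤ DF (T / 2) (T / 2) :=
  single_update_maximizes_time_dependent_revenue_general f hf_mono hf_conv F hF DF hDF T K x hpos
    hsum
end

section
/- Let f be increasing convex with F(x) = ∫₀ˣ f. For the two-update linear comparison generalized to convex f: for all x₁, x₂, x₃ > 0, DF(x₂, x₁) + DF(x₃, x₂) ≤ DF(x₁ + x₃, x₂), where DF(x,y) = F(x+y) − F(x) − F(y). -/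
/-!
Since `F (a + x₂) - F a = ∫ t in 0..x₂, f (t + a)`, the claim is the inequality
`g x₁ + g x₃ ≤ g 0 + g (x₁ + x₃)` for this increment function `g`. It already holds under the
integral sign: `t + x₁` and `t + x₃` lie in `[t, t + (x₁ + x₃)]` and have the same sum as its
endpoints, so convexity of `f` bounds `f (t + x₁) + f (t + x₃)` by the values at the endpoints.
-/

open Set intervalIntegral MeasureTheory

theorem ConvexOn.map_add_map_le_of_add_eq {𝕜 β : Type*} [Field 𝕜] [LinearOrder 𝕜]
    [IsStrictOrderedRing 𝕜] [AddCommGroup β] [PartialOrder β] [IsOrderedAddMonoid β]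
    [Module 𝕜 β] [PosSMulMono 𝕜 β] {s : Set 𝕜} {f : 𝕜 → β} (hf : ConvexOn 𝕜 s f)
    {a b x y : 𝕜} (ha : a ∈ s) (hb : b ∈ s) (hx : x ∈ Icc a b) (hxy : x + y = a + b) :
    f x + f y ≤ f a + f b := by
  obtain rfl | hab := eq_or_lt_of_le (hx.1.trans hx.2)
  · obtain rfl : x = a := le_antisymm hx.2 hx.1
    obtain rfl : y = x := by linear_combination hxy
    rfl
  set μ := (b - x) / (b - a)
  have hba : b - a ≠ 0 := sub_ne_zero.2 hab.ne'
  have hμ₀ : 0 ≤ μ := div_nonneg (sub_nonneg.2 hx.2) (sub_nonneg.2 hab.le)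
  have hμ₁ : 0 ≤ 1 - μ := by
    rw [sub_nonneg, div_le_one (sub_pos.2 hab)]; linarith [hx.1]
  have hx' : μ • a + (1 - μ) • b = x := by simp only [μ, smul_eq_mul]; field_simp; ring
  have hy' : (1 - μ) • a + μ • b = y := by
    simp only [μ, smul_eq_mul]; field_simp; linear_combination (a - b) * hxy
  calc f x + f y
      ≤ (μ • f a + (1 - μ) • f b) + ((1 - μ) • f a + μ • f b) :=
        add_le_add (hx' ▸ hf.2 ha hb hμ₀ hμ₁ (by ring)) (hy' ▸ hf.2 ha hb hμ₁ hμ₀ (by ring))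
    _ = f a + f b := by module

theorem ConvexOn.integral_comp_add_add_integral_comp_add_le {f : ℝ → ℝ}
    (hf : ConvexOn ℝ univ f) {h x y : ℝ} (hh : 0 ≤ h) (hx : 0 ≤ x) (hy : 0 ≤ y) :
    (∫ t in 0..h, f (t + x)) + ∫ t in 0..h, f (t + y) ≤
      (∫ t in 0..h, f t) + ∫ t in 0..h, f (t + (x + y)) := by
  have hfc : Continuous f := continuousOn_univ.1 (hf.continuousOn isOpen_univ)
  have hint (c : ℝ) : IntervalIntegrable (fun t ↦ f (t + c)) volume 0 h :=
    (hfc.comp (continuous_add_const c)).intervalIntegrable _ _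
  rw [← integral_add (hint x) (hint y), ← integral_add (hfc.intervalIntegrable _ _) (hint _)]
  refine integral_mono_on hh ((hint x).add (hint y)) ((hfc.intervalIntegrable _ _).add (hint _))
    fun t _ ↦ hf.map_add_map_le_of_add_eq (mem_univ _) (mem_univ _) ⟨?_, ?_⟩ ?_
  all_goals linarith

theorem DF_superadditive_merge_general
    (f : ℝ → ℝ) (hf_conv : ConvexOn ℝ Set.univ f)
    (F : ℝ → ℝ) (hF : ∀ x, F x = ∫ t in (0:ℝ)..x, f t)
    (DF : ℝ → ℝ → ℝ) (hDF : ∀ x y, DF x y = F (x + y) - F x - F y) :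
    ∀ x₁ x₂ x₃ : ℝ, 0 < x₁ → 0 < x₂ → 0 < x₃ →
      DF x₂ x₁ + DF x₃ x₂ ≤ DF (x₁ + x₃) x₂ := by
  intro x₁ x₂ x₃ h₁ h₂ h₃
  have hfc : Continuous f := continuousOn_univ.1 (hf_conv.continuousOn isOpen_univ)
  have increment (a : ℝ) : F (a + x₂) - F a = ∫ t in 0..x₂, f (t + a) := by
    rw [hF, hF, integral_interval_sub_left (hfc.intervalIntegrable _ _)
      (hfc.intervalIntegrable _ _), integral_comp_add_right, zero_add, add_comm]
  have hF₀ : F 0 = 0 := by simp [hF]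
  have h₀ := increment 0
  simp only [zero_add, add_zero, hF₀, sub_zero] at h₀
  have hmerge := hf_conv.integral_comp_add_add_integral_comp_add_le h₂.le h₁.le h₃.le
  rw [hDF, hDF, hDF, add_comm x₂ x₁]
  linarith [increment x₁, increment x₃, increment (x₁ + x₃)]

theorem DF_superadditive_merge
    (f : ℝ → ℝ) (hf_mono : Monotone f) (hf_conv : ConvexOn ℝ Set.univ f)
    (F : ℝ → ℝ) (hF : ∀ x, F x = ∫ t in (0:ℝ)..x, f t)
    (DF : ℝ → ℝ → ℝ) (hDF : ∀ x y, DF x y = F (x + y) - F x - F y) :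
    ∀ x₁ x₂ x₃ : ℝ, 0 < x₁ → 0 < x₂ → 0 < x₃ →
      DF x₂ x₁ + DF x₃ x₂ ≤ DF (x₁ + x₃) x₂ :=
  DF_superadditive_merge_general f hf_conv F hF DF hDF
end
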